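/- The function g satisfies the subadditivity-type bound: for all x, y, N_B ≥ 0, g(x + y + N_B) − g(N_B) ≤ (g(x + N_B) − g(N_B)) + (g(y + N_B) − g(N_B)). -/

import Mathlib

/-!
`g` is concave on `[0, ∞)`: its second derivative is `((x + 1)⁻¹ - x⁻¹) / log 2 ≤ 0`.
For a concave function the increment over a step of fixed length can only shrink when the
base point moves right, so `g (x + y + NB) - g (y + NB) ≤ g (x + NB) - g NB`.
-/

/-- The bosonic entropy function `g(x) = (x+1)·log₂(x+1) − x·log₂ x`,
with the convention `g(0) = 0` (note `Real.logb 2 0 = 0`). -/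
noncomputable def g (x : ℝ) : ℝ := (x + 1) * Real.logb 2 (x + 1) - x * Real.logb 2 x

open Set Real

theorem ConcaveOn.map_add_add_add_map_le {𝕜 β : Type*} [Field 𝕜] [LinearOrder 𝕜]
    [IsStrictOrderedRing 𝕜] [AddCommMonoid β] [PartialOrder β] [IsOrderedAddMonoid β]
    [Module 𝕜 β] {s : Set 𝕜} {f : 𝕜 → β} (hf : ConcaveOn 𝕜 s f) {x y a : 𝕜}
    (hx : 0 ≤ x) (hy : 0 ≤ y) (ha : a ∈ s) (hxya : x + y + a ∈ s) :
    f (x + y + a) + f a ≤ f (x + a) + f (y + a) := by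
  rcases (add_nonneg hx hy).eq_or_lt with hxy | hxy
  · obtain rfl : x = 0 := by linarith
    obtain rfl : y = 0 := by linarith
    simp
  -- `x + a` and `y + a` are the convex combinations of `a` and `x + y + a` with swapped weights.
  set μ := x / (x + y)
  set ν := y / (x + y)
  have hμν : μ + ν = 1 := by rw [← add_div, div_self hxy.ne']
  have hμ : 0 ≤ μ := div_nonneg hx hxy.le
  have hν : 0 ≤ ν := div_nonneg hy hxy.le
  have hxa : ν • a + μ • (x + y + a) = x + a := by
    simp only [μ, ν, smul_eq_mul]; field_simp; ring
  have hya : μ • a + ν • (x + y + a) = y + a := by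
    simp only [μ, ν, smul_eq_mul]; field_simp; ring
  calc f (x + y + a) + f a
      = (ν • f a + μ • f (x + y + a)) + (μ • f a + ν • f (x + y + a)) := by
        rw [add_add_add_comm, ← add_smul, ← add_smul, add_comm ν, hμν, one_smul, one_smul,
          add_comm]
    _ ≤ f (x + a) + f (y + a) := by
        rw [← hxa, ← hya]
        exact add_le_add (hf.2 ha hxya hν hμ (by rwa [add_comm])) (hf.2 ha hxya hμ hν hμν)

theorem g_eq_div_log_two : g = fun x => ((x + 1) * log (x + 1) - x * log x) / log 2 := by
  funext x
  simp only [g, logb]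
  ring

theorem hasDerivAt_g {x : ℝ} (hx : 0 < x) :
    HasDerivAt g ((log (x + 1) - log x) / log 2) x := by
  have hshift := (hasDerivAt_mul_log (x := x + 1) (by linarith)).comp_add_const x 1
  rw [g_eq_div_log_two]
  exact ((hshift.sub (hasDerivAt_mul_log hx.ne')).div_const (log 2)).congr_deriv (by ring)

theorem concaveOn_g : ConcaveOn ℝ (Ici 0) g := by
  refine concaveOn_of_hasDerivWithinAt2_nonpos (convex_Ici 0)
    (f' := fun x => (log (x + 1) - log x) / log 2)
    (f'' := fun x => ((x + 1)⁻¹ - x⁻¹) / log 2) ?_ ?_ ?_ ?_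
  · rw [g_eq_div_log_two]
    exact ((continuous_add_const 1).mul_log.sub continuous_mul_log).div_const _ |>.continuousOn
  all_goals simp only [interior_Ici, mem_Ioi]
  · exact fun x hx => (hasDerivAt_g hx).hasDerivWithinAt
  · intro x hx
    have hshift := (hasDerivAt_log (x := x + 1) (by linarith)).comp_add_const x 1
    exact ((hshift.sub (hasDerivAt_log hx.ne')).div_const (log 2)).hasDerivWithinAt
  · intro x hx
    have : (x + 1)⁻¹ ≤ x⁻¹ := inv_anti₀ hx (by linarith)
    exact div_nonpos_of_nonpos_of_nonneg (by linarith) (log_nonneg one_le_two)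

/-- Subadditivity-type bound: the coherent-state sum-rate constraint is at most the sum of
individual rate constraints. -/
theorem g_subadditive (x y NB : ℝ) (hx : 0 ≤ x) (hy : 0 ≤ y) (hNB : 0 ≤ NB) :
    g (x + y + NB) - g NB ≤ (g (x + NB) - g NB) + (g (y + NB) - g NB) := by
  have := concaveOn_g.map_add_add_add_map_le hx hy (mem_Ici.2 hNB) (mem_Ici.2 (by positivity))
  linarith
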